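/- Let γ' > 0, let (D_k)_{k≥0} and (ξ'_k)_{k≥2} be positive real sequences, let γ ≥ 2γ' and ρ > 0, and suppose that ξ'_2 ≥ e^{2γ'} and, for all k ≥ 0, ξ'_{k+3} ≥ e^{γ(k+1)}·e^{2γ'}·∏_{j=0}^k (1 − ρ·e^{−γ'(2+j)}). If ρ·e^{−2γ'}/(1−e^{−γ'}) ≤ 1 − e^{−(γ−γ')}, then for all k ≥ 0, e^{(γ−γ')(k+1)}·∏_{j=0}^k (1 − ρ e^{−γ'(2+j)}) ≥ 1, and hence ξ'_{2+k+1} ≥ e^{γ'(2+k+1)}. -/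

import Mathlib

open Real Finset

private lemma weier (u : ℕ → ℝ) (hu : ∀ j, 0 ≤ u j) (hu1 : ∀ j, u j ≤ 1) (n : ℕ) :
    1 - ∑ j ∈ Finset.range n, u j ≤ ∏ j ∈ Finset.range n, (1 - u j) := by
  induction n with
  | zero => simp
  | succ n ih =>
    rw [Finset.sum_range_succ, Finset.prod_range_succ]
    have hs : 0 ≤ ∑ j ∈ Finset.range n, u j :=
      Finset.sum_nonneg (fun j _ => hu j)
    nlinarith [hu n, hu1 n]

/-- Inductive exponential-growth estimate of Lemma 2: if the tail product is
close enough to 1, then `e^{(γ−γ')(k+1)}·∏_{j=0}^k (1 − ρe^{−γ'(2+j)}) ≥ 1`,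
and hence `ξ'_{k+3} ≥ e^{γ'(k+3)}`. -/
theorem stmt11 (γ γ' ρ : ℝ) (hγ' : 0 < γ') (hγ : 2 * γ' ≤ γ) (hρ : 0 < ρ)
    (hsmall : ρ * exp (-2 * γ') / (1 - exp (-γ')) ≤ 1 - exp (-(γ - γ')))
    (ξ' : ℕ → ℝ) (hξ'pos : ∀ k, 0 < ξ' k) (hξ2 : exp (2 * γ') ≤ ξ' 2)
    (hrec : ∀ k : ℕ, exp (γ * (k + 1)) * exp (2 * γ') *
      ∏ j ∈ Finset.range (k + 1), (1 - ρ * exp (-γ' * (2 + j))) ≤ ξ' (k + 3)) :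
    (∀ k : ℕ, 1 ≤ exp ((γ - γ') * (k + 1)) *
      ∏ j ∈ Finset.range (k + 1), (1 - ρ * exp (-γ' * (2 + j)))) ∧
    (∀ k : ℕ, exp (γ' * (k + 3)) ≤ ξ' (k + 3)) := by
  set r := exp (-γ') with hr
  have hr1 : r < 1 := by rw [hr]; exact exp_lt_one_iff.mpr (by linarith)
  have hr0 : 0 < r := exp_pos _
  have h1r : 0 < 1 - r := by linarith
  have hu : ∀ j : ℕ, 0 ≤ ρ * exp (-γ' * (2 + j)) :=
    fun j => mul_nonneg hρ.le (exp_pos _).le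
  -- bound on the partial sums
  have hsum : ∀ n : ℕ, ∑ j ∈ Finset.range n, ρ * exp (-γ' * (2 + j))
      ≤ ρ * exp (-2 * γ') / (1 - r) := by
    intro n
    have hgeom : ∑ j ∈ Finset.range n, ρ * exp (-γ' * (2 + j))
        = ρ * exp (-2 * γ') * ∑ j ∈ Finset.range n, r ^ j := by
      rw [Finset.mul_sum]
      refine Finset.sum_congr rfl fun j _ => ?_
      rw [hr, ← Real.exp_nat_mul, mul_assoc, ← Real.exp_add]
      congr 1
      ring
    rw [hgeom]
    have hsle : ∑ j ∈ Finset.range n, r ^ j ≤ 1 / (1 - r) := by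
      rw [geom_sum_eq (ne_of_lt hr1)]
      have hflip : (r ^ n - 1) / (r - 1) = (1 - r ^ n) / (1 - r) := by
        rw [← neg_sub (r ^ n) 1, ← neg_sub r 1, neg_div_neg_eq]
      rw [hflip, div_le_div_iff₀ h1r h1r]
      nlinarith [pow_pos hr0 n]
    calc ρ * exp (-2 * γ') * ∑ j ∈ Finset.range n, r ^ j
        ≤ ρ * exp (-2 * γ') * (1 / (1 - r)) := by
          apply mul_le_mul_of_nonneg_left hsle (mul_nonneg hρ.le (exp_pos _).le)
      _ = ρ * exp (-2 * γ') / (1 - r) := by ring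
  have hexpg : exp (-(γ - γ')) < 1 := exp_lt_one_iff.mpr (by linarith)
  -- each term is at most 1
  have hu1 : ∀ j : ℕ, ρ * exp (-γ' * (2 + j)) ≤ 1 := by
    intro j
    have h1 := hsum (j + 1)
    have h2 : ρ * exp (-γ' * (2 + j)) ≤ ∑ i ∈ Finset.range (j + 1),
        ρ * exp (-γ' * (2 + i)) :=
      Finset.single_le_sum (fun i _ => hu i) (Finset.self_mem_range_succ j)
    have := exp_pos (-(γ - γ'))
    linarith
  -- the key product bound
  have hmain : ∀ k : ℕ, 1 ≤ exp ((γ - γ') * (k + 1)) *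
      ∏ j ∈ Finset.range (k + 1), (1 - ρ * exp (-γ' * (2 + j))) := by
    intro k
    have hprod : exp (-(γ - γ')) ≤
        ∏ j ∈ Finset.range (k + 1), (1 - ρ * exp (-γ' * (2 + j))) := by
      have := weier (fun j => ρ * exp (-γ' * (2 + j))) hu hu1 (k + 1)
      have h2 := hsum (k + 1)
      linarith
    have hexp : exp (γ - γ') ≤ exp ((γ - γ') * (k + 1)) := by
      apply exp_le_exp.mpr
      nlinarith [Nat.cast_nonneg (α := ℝ) k]
    calc (1:ℝ) = exp (γ - γ') * exp (-(γ - γ')) := by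
          rw [← exp_add]; simp
      _ ≤ exp ((γ - γ') * (k + 1)) *
          ∏ j ∈ Finset.range (k + 1), (1 - ρ * exp (-γ' * (2 + j))) := by
          apply mul_le_mul hexp hprod (exp_pos _).le (exp_pos _).le
  refine ⟨hmain, fun k => ?_⟩
  have h1 := hrec k
  have h2 := hmain k
  have hE : exp (γ * ((k : ℝ) + 1)) * exp (2 * γ')
      = exp (γ' * ((k : ℝ) + 3)) * exp ((γ - γ') * ((k : ℝ) + 1)) := by
    rw [← exp_add, ← exp_add]; congr 1; ring
  have key : exp (γ' * ((k : ℝ) + 3)) ≤ exp (γ * (k + 1)) * exp (2 * γ') *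
      ∏ j ∈ Finset.range (k + 1), (1 - ρ * exp (-γ' * (2 + j))) := by
    rw [hE, mul_assoc]
    exact le_mul_of_one_le_right (exp_pos _).le h2
  linarith
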